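/- For all positive integers a, b: p^a ∑_{ℓ=0}^{b-1} [a+ℓ-1 choose ℓ]_q q^ℓ (1−·p)^ℓ = ∑_{s=0}^{b-1} [a+b-1 choose a+s]_q p^{a+s} (1−·p)^{b-1-s}. -/

import Mathlib

/-- The `q`-analog `[n]_q = 1 + q + ⋯ + q^(n-1)` of a natural number. -/
def qNum {R : Type*} [CommRing R] (q : R) (n : ℕ) : R := ∑ i ∈ Finset.range n, q ^ i

/-- The `q`-factorial `[n]! = [1][2]⋯[n]`. -/
def qFact {R : Type*} [CommRing R] (q : R) (n : ℕ) : R := ∏ i ∈ Finset.range n, qNum q (i + 1)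

/-- The Gaussian (`q`-)binomial coefficient, via the `q`-Pascal recursion. -/
def qBinom {R : Type*} [CommRing R] (q : R) : ℕ → ℕ → R
  | _, 0 => 1
  | 0, _ + 1 => 0
  | n + 1, k + 1 => qBinom q n k + q ^ (k + 1) * qBinom q n (k + 1)

/-- The `q`-shifted product `(1 −· p)^m = ∏_{i=0}^{m-1} (1 - p q^i)`. -/
def qProdSub {R : Type*} [CommRing R] (q p : R) (m : ℕ) : R :=
  ∏ i ∈ Finset.range m, (1 - p * q ^ i)

/-- The `q`-shifted power `(x +· y)^m = ∏_{i=0}^{m-1} (x + q^i y)`. -/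
def qProdAdd {R : Type*} [CommRing R] (q x y : R) (m : ℕ) : R :=
  ∏ i ∈ Finset.range m, (x + q ^ i * y)

/-!
Write `a = c + 1`, `b = n + 1` and index the right-hand side by the antidiagonal `s + t = n`,
with term `T s t = [c+s+t+1, c+s+1] p^(c+s+1) (1 −· p)^t`. Put
`F s t = q^t [c+s+t, c+s] p^(c+s+1) (1 −· p)^t`. The dual `q`-Pascal rule
`[m+k+1, k+1] = q^m [m+k, k] + [m+k, k+1]` gives `T s (t+1) + F (s+1) t = T s t + F s (t+1)`,
so the antidiagonal sum of `T` telescopes to `∑_{k ≤ n} F 0 k`, which is the left-hand side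
by the symmetry `[c+k, c] = [c+k, k]`.
-/

open Finset

theorem sum_antidiagonal_eq_sum_range_of_add_eq {M : Type*} [AddCommGroup M]
    (T F : ℕ → ℕ → M) (hTF : ∀ s t, T s (t + 1) + F (s + 1) t = T s t + F s (t + 1))
    (h0 : ∀ s, T s 0 = F s 0) (n : ℕ) :
    ∑ x ∈ antidiagonal n, T x.1 x.2 = ∑ k ∈ range (n + 1), F 0 k := by
  induction n with
  | zero => simp [h0]
  | succ n ih =>
    have hsum : ∑ x ∈ antidiagonal n, (T x.1 (x.2 + 1) + F (x.1 + 1) x.2) =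
        ∑ x ∈ antidiagonal n, (T x.1 x.2 + F x.1 (x.2 + 1)) :=
      sum_congr rfl fun x _ => hTF x.1 x.2
    have hF := (Nat.sum_antidiagonal_succ (n := n) (f := fun x => F x.1 x.2)).symm.trans
      (Nat.sum_antidiagonal_succ' (f := fun x => F x.1 x.2))
    rw [sum_add_distrib, sum_add_distrib] at hsum
    rw [Nat.sum_antidiagonal_succ', sum_range_succ, ← ih, h0]
    simp only at hF ⊢
    linear_combination (norm := module) hsum - hF

section

variable {R : Type*} [CommRing R] (q p : R)

theorem qBinom_zero_right (n : ℕ) : qBinom q n 0 = 1 := by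
  cases n <;> rfl

theorem qBinom_succ_succ (n k : ℕ) :
    qBinom q (n + 1) (k + 1) = qBinom q n k + q ^ (k + 1) * qBinom q n (k + 1) := rfl

theorem qBinom_eq_zero_of_lt {n k : ℕ} (h : n < k) : qBinom q n k = 0 := by
  induction n generalizing k with
  | zero => obtain ⟨k, rfl⟩ := Nat.exists_eq_add_one.2 h; rfl
  | succ n ih =>
    obtain ⟨k, rfl⟩ := Nat.exists_eq_add_one.2 (n.zero_lt_succ.trans h)
    rw [qBinom_succ_succ, ih (by omega), ih (by omega), mul_zero, add_zero]

theorem qBinom_self (n : ℕ) : qBinom q n n = 1 := by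
  induction n with
  | zero => rfl
  | succ n ih =>
    rw [qBinom_succ_succ, ih, qBinom_eq_zero_of_lt q n.lt_succ_self, mul_zero, add_zero]

theorem qBinom_succ_succ' {m k n : ℕ} (h : m + k = n) :
    qBinom q (n + 1) (k + 1) = q ^ m * qBinom q n k + qBinom q n (k + 1) := by
  induction n generalizing m k with
  | zero =>
    obtain ⟨rfl, rfl⟩ : m = 0 ∧ k = 0 := by omega
    simp [qBinom_self, qBinom_eq_zero_of_lt]
  | succ n ih =>
    rcases k with _ | j
    · obtain rfl : m = n + 1 := by omega
      have h1 := ih (m := n) (k := 0) (by omega)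
      have d1 := qBinom_succ_succ q n 0
      rw [qBinom_succ_succ q (n + 1) 0]
      simp only [qBinom_zero_right] at h1 d1 ⊢
      linear_combination q * h1 - d1
    rcases m with _ | m
    · obtain rfl : j = n := by omega
      simp [qBinom_self, qBinom_eq_zero_of_lt]
    rw [qBinom_succ_succ q (n + 1) (j + 1)]
    linear_combination ih (m := m + 1) (k := j) (by omega)
      + q ^ (j + 2) * ih (m := m) (k := j + 1) (by omega)
      - q ^ (m + 1) * qBinom_succ_succ q n j - qBinom_succ_succ q n (j + 1)

theorem qBinom_symm_of_add_eq {m k n : ℕ} (h : m + k = n) : qBinom q n k = qBinom q n m := by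
  induction n generalizing m k with
  | zero =>
    obtain ⟨rfl, rfl⟩ : m = 0 ∧ k = 0 := by omega
    rfl
  | succ n ih =>
    rcases k with _ | j
    · obtain rfl : m = n + 1 := by omega
      rw [qBinom_zero_right, qBinom_self]
    rcases m with _ | m
    · obtain rfl : j = n := by omega
      rw [qBinom_zero_right, qBinom_self]
    rw [qBinom_succ_succ, qBinom_succ_succ' q (m := j + 1) (by omega),
      ih (m := m + 1) (k := j) (by omega), ih (m := m) (k := j + 1) (by omega)]
    ring

theorem qProdSub_succ (m : ℕ) :
    qProdSub q p (m + 1) = qProdSub q p m * (1 - p * q ^ m) :=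
  prod_range_succ _ _

theorem sum_antidiagonal_qBinom_mul_qProdSub (c n : ℕ) :
    ∑ x ∈ antidiagonal n,
        qBinom q (c + x.1 + x.2 + 1) (c + x.1 + 1) * p ^ (c + x.1 + 1) * qProdSub q p x.2 =
      p ^ (c + 1) * ∑ k ∈ range (n + 1), qBinom q (c + k) k * q ^ k * qProdSub q p k := by
  refine (sum_antidiagonal_eq_sum_range_of_add_eq
    (fun s t => qBinom q (c + s + t + 1) (c + s + 1) * p ^ (c + s + 1) * qProdSub q p t)
    (fun s t => q ^ t * qBinom q (c + s + t) (c + s) * p ^ (c + s + 1) * qProdSub q p t)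
    ?_ ?_ n).trans ?_
  · intro s t
    have pascal : qBinom q (c + s + (t + 1) + 1) (c + s + 1) =
        q ^ (t + 1) * qBinom q (c + s + (t + 1)) (c + s) + qBinom q (c + s + t + 1) (c + s + 1) :=
      qBinom_succ_succ' q (by omega)
    rw [pascal, qProdSub_succ, show c + (s + 1) = c + s + 1 by ring,
      show c + s + 1 + t = c + s + t + 1 by ring]
    ring
  · intro s
    simp [qBinom_self, qProdSub]
  · rw [mul_sum]
    refine sum_congr rfl fun k _ => ?_
    simp only [add_zero]
    rw [qBinom_symm_of_add_eq q (add_comm k c)]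
    ring

end

theorem q_parties_alt_general {R : Type*} [CommRing R] (q p : R) (a b : ℕ)
    (ha : 1 ≤ a) :
    p ^ a * (∑ ℓ ∈ Finset.range b, qBinom q (a + ℓ - 1) ℓ * q ^ ℓ * qProdSub q p ℓ) =
      ∑ s ∈ Finset.range b, qBinom q (a + b - 1) (a + s) * p ^ (a + s) *
        qProdSub q p (b - 1 - s) := by
  obtain ⟨c, rfl⟩ : ∃ c, a = c + 1 := ⟨a - 1, by omega⟩
  rcases b with _ | n
  · simp
  simp only [show ∀ k, c + 1 + k - 1 = c + k by omega, Nat.add_sub_cancel]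
  rw [← sum_antidiagonal_qBinom_mul_qProdSub, Nat.sum_antidiagonal_eq_sum_range_succ
    (fun s t => qBinom q (c + s + t + 1) (c + s + 1) * p ^ (c + s + 1) * qProdSub q p t)]
  refine sum_congr rfl fun s hs => ?_
  rw [show c + s + (n - s) + 1 = c + (n + 1) by have := mem_range.1 hs; omega, add_right_comm c s]

/-- Identity (3.18): for positive integers a, b,
`p^a ∑_{ℓ<b} [a+ℓ-1 choose ℓ] q^ℓ (1−·p)^ℓ = ∑_{s<b} [a+b-1 choose a+s] p^{a+s} (1−·p)^{b-1-s}`. -/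
theorem q_parties_alt {R : Type*} [CommRing R] (q p : R) (a b : ℕ)
    (ha : 1 ≤ a) (hb : 1 ≤ b) :
    p ^ a * (∑ ℓ ∈ Finset.range b, qBinom q (a + ℓ - 1) ℓ * q ^ ℓ * qProdSub q p ℓ) =
      ∑ s ∈ Finset.range b, qBinom q (a + b - 1) (a + s) * p ^ (a + s) *
        qProdSub q p (b - 1 - s) :=
  q_parties_alt_general q p a b ha
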